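/- There exists a constant c₂ > 0 with the following property. For every sequence x : ℤ → [0,∞), consider the Markov chain on ℤ in which, from an even vertex 2n, the chain moves to 2n+1 with probability 1/(1+e^{−x_n}) and to 2n−1 with probability e^{−x_n}/(1+e^{−x_n}), and from an odd vertex 2n+1, it moves to 2n with probability 1/(1+e^{−x_{n+1}}) and to 2n+2 with probability e^{−x_{n+1}}/(1+e^{−x_{n+1}}); let p_m(0) denote the probability that this chain started at 0 is at 0 after m steps. Then ∑_{k≥1} p_k(0)/k ≥ c₂ · min(x₀, x₁), where the sum is taken in [0,∞]. -/
import Mathlib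


open scoped ENNReal

/-- One-step transition probability of the network random walk on ℤ in which each edge
(2n, 2n+1) has conductance 1 and each edge (2n−1, 2n) has conductance e^{−x_n}:
from the even vertex 2n, move to 2n+1 with probability 1/(1+e^{−x_n}) and to 2n−1 with
probability e^{−x_n}/(1+e^{−x_n}); from the odd vertex 2n+1, move to 2n with probability
1/(1+e^{−x_{n+1}}) and to 2n+2 with probability e^{−x_{n+1}}/(1+e^{−x_{n+1}}). -/
noncomputable def stepProb (x : ℤ → ℝ) (a b : ℤ) : ℝ :=
  if Even a then
    -- a = 2n with n = a/2
    if b = a + 1 then 1 / (1 + Real.exp (-(x (a / 2))))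
    else if b = a - 1 then Real.exp (-(x (a / 2))) / (1 + Real.exp (-(x (a / 2))))
    else 0
  else
    -- a = 2n+1 with n = (a-1)/2
    if b = a - 1 then 1 / (1 + Real.exp (-(x ((a - 1) / 2 + 1))))
    else if b = a + 1 then
      Real.exp (-(x ((a - 1) / 2 + 1))) / (1 + Real.exp (-(x ((a - 1) / 2 + 1))))
    else 0

/-- The distribution after m steps of the above chain started at 0: `walkDist x m z` is
the probability of being at z after m steps.  (One step of the chain moves from a vertex
to one of its two neighbors, so the mass at z after m+1 steps comes from z−1 and z+1.) -/
noncomputable def walkDist (x : ℤ → ℝ) : ℕ → ℤ → ℝ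
  | 0, z => if z = 0 then 1 else 0
  | m + 1, z =>
      walkDist x m (z - 1) * stepProb x (z - 1) z + walkDist x m (z + 1) * stepProb x (z + 1) z

lemma step_nonneg (x : ℤ → ℝ) (a b : ℤ) : 0 ≤ stepProb x a b := by
  unfold stepProb; split_ifs <;> positivity

lemma wd_nonneg (x : ℤ → ℝ) : ∀ m z, 0 ≤ walkDist x m z
  | 0, z => by unfold walkDist; split_ifs <;> norm_num
  | m + 1, z => by
      have h1 := wd_nonneg x m (z - 1)
      have h2 := wd_nonneg x m (z + 1)
      have := step_nonneg x (z-1) z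
      have := step_nonneg x (z+1) z
      unfold walkDist; positivity

lemma step01 (x : ℤ → ℝ) : stepProb x 0 1 = 1 / (1 + Real.exp (-(x 0))) := by
  norm_num [stepProb]

lemma step10 (x : ℤ → ℝ) : stepProb x 1 0 = 1 / (1 + Real.exp (-(x 1))) := by
  norm_num [stepProb]

lemma key (x : ℤ → ℝ) (k : ℕ) :
    (1 / (1 + Real.exp (-(x 0))) * (1 / (1 + Real.exp (-(x 1))))) ^ k ≤ walkDist x (2*k) 0 ∧
    (1 / (1 + Real.exp (-(x 0))) * (1 / (1 + Real.exp (-(x 1))))) ^ k * (1 / (1 + Real.exp (-(x 0)))) ≤ walkDist x (2*k+1) 1 := by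
  set a := 1 / (1 + Real.exp (-(x 0))) with ha
  set b := 1 / (1 + Real.exp (-(x 1))) with hb
  have ha0 : 0 ≤ a := by positivity
  have hb0 : 0 ≤ b := by positivity
  induction k with
  | zero =>
    constructor
    · simp [walkDist]
    · rw [pow_zero, one_mul]
      show a ≤ walkDist x 1 1
      have : walkDist x 1 1 = walkDist x 0 0 * stepProb x 0 1 + walkDist x 0 2 * stepProb x 2 1 := by
        show walkDist x 0 (1-1) * stepProb x (1-1) 1 + walkDist x 0 (1+1) * stepProb x (1+1) 1 = _
        norm_num
      rw [this, step01 x, ← ha]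
      have : walkDist x 0 0 = 1 := by simp [walkDist]
      rw [this]
      have := wd_nonneg x 0 2
      have := step_nonneg x 2 1
      nlinarith
  | succ k ih =>
    obtain ⟨ih0, ih1⟩ := ih
    have h0 : (a*b)^(k+1) ≤ walkDist x (2*(k+1)) 0 := by
      have heq : walkDist x (2*(k+1)) 0
          = walkDist x (2*k+1) (-1) * stepProb x (-1) 0 + walkDist x (2*k+1) 1 * stepProb x 1 0 := by
        show walkDist x (2*k+1+1) 0 = _
        show walkDist x (2*k+1) (0-1) * stepProb x (0-1) 0 + walkDist x (2*k+1) (0+1) * stepProb x (0+1) 0 = _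
        norm_num
      rw [heq, step10 x, ← hb]
      have h1 := wd_nonneg x (2*k+1) (-1)
      have h2 := step_nonneg x (-1) 0
      calc (a*b)^(k+1) = ((a*b)^k * a) * b := by ring
        _ ≤ walkDist x (2*k+1) 1 * b := mul_le_mul_of_nonneg_right ih1 hb0
        _ ≤ _ := le_add_of_nonneg_left (mul_nonneg h1 h2)
    refine ⟨h0, ?_⟩
    have heq : walkDist x (2*(k+1)+1) 1
        = walkDist x (2*(k+1)) 0 * stepProb x 0 1 + walkDist x (2*(k+1)) 2 * stepProb x 2 1 := by
      show walkDist x (2*(k+1)) (1-1) * stepProb x (1-1) 1 + walkDist x (2*(k+1)) (1+1) * stepProb x (1+1) 1 = _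
      norm_num
    rw [heq, step01 x, ← ha]
    have h1 := wd_nonneg x (2*(k+1)) 2
    have h2 := step_nonneg x 2 1
    calc (a*b)^(k+1) * a ≤ walkDist x (2*(k+1)) 0 * a := mul_le_mul_of_nonneg_right h0 ha0
      _ ≤ _ := le_add_of_nonneg_right (mul_nonneg h1 h2)

/-- There is a constant c₂ > 0 such that for every choice of nonnegative weights
x : ℤ → [0,∞), the return probabilities of the network random walk satisfy
∑_{k≥1} p_k(0)/k ≥ c₂·min(x₀, x₁), the sum being taken in [0,∞]. -/
theorem return_probability_sum_lower_bound :
    ∃ c₂ : ℝ, 0 < c₂ ∧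
      ∀ x : ℤ → ℝ, (∀ n, 0 ≤ x n) →
        ENNReal.ofReal (c₂ * min (x 0) (x 1)) ≤
          ∑' k : ℕ, ENNReal.ofReal (walkDist x (k + 1) 0) / ((k : ℝ≥0∞) + 1) := by
  refine ⟨1/32, by norm_num, fun x hx => ?_⟩
  set g : ℕ → ℝ≥0∞ := fun k => ENNReal.ofReal (walkDist x (k + 1) 0) / ((k : ℝ≥0∞) + 1) with hg
  show ENNReal.ofReal (1/32 * min (x 0) (x 1)) ≤ ∑' k, g k
  set s := Real.exp (-(x 0)) with hs
  set t := Real.exp (-(x 1)) with ht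
  set a := 1 / (1 + s) with haa
  set b := 1 / (1 + t) with hbb
  set α := a * b with hαα
  set μ := min (x 0) (x 1) with hμ
  have hμ0 : 0 ≤ μ := le_min (hx 0) (hx 1)
  have hs0 : 0 < s := Real.exp_pos _
  have ht0 : 0 < t := Real.exp_pos _
  have hs1 : s ≤ 1 := Real.exp_le_one_iff.mpr (by linarith [hx 0])
  have ht1 : t ≤ 1 := Real.exp_le_one_iff.mpr (by linarith [hx 1])
  have hsμ : s ≤ Real.exp (-μ) := Real.exp_le_exp.mpr (by simp [hμ, min_le_left])
  have htμ : t ≤ Real.exp (-μ) := Real.exp_le_exp.mpr (by simp [hμ, min_le_right])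
  have ha0 : 0 < a := by positivity
  have hb0 : 0 < b := by positivity
  have hα0 : 0 < α := mul_pos ha0 hb0
  have haq : 1/4 ≤ a * b := by
    rw [haa, hbb, div_mul_div_comm]
    rw [div_le_div_iff₀ (by norm_num) (by positivity)]
    nlinarith
  have hα1 : α < 1 := by
    rw [hαα, haa, hbb, div_mul_div_comm, div_lt_one (by positivity)]
    nlinarith
  have hone : 1 - α = (s + t + s*t) / ((1+s)*(1+t)) := by
    rw [hαα, haa, hbb]
    field_simp
    ring
  have h1α : 1 - α ≤ 3 * Real.exp (-μ) := by
    rw [hone]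
    have h1 : (s + t + s*t) / ((1+s)*(1+t)) ≤ s + t + s*t := by
      apply div_le_self (by positivity)
      nlinarith
    nlinarith [Real.exp_pos (-μ)]
  have hlog : Real.log (1 - α) ≤ Real.log 3 - μ := by
    calc Real.log (1 - α) ≤ Real.log (3 * Real.exp (-μ)) :=
          Real.log_le_log (by linarith) h1α
      _ = Real.log 3 + (-μ) := by rw [Real.log_mul (by norm_num) (Real.exp_ne_zero _), Real.log_exp]
      _ = Real.log 3 - μ := by ring
  have hlog3 : Real.log 3 ≤ 2 := by
    rw [Real.log_le_iff_le_exp (by norm_num)]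
    linarith [Real.add_one_le_exp 2]
  rcases le_or_gt μ 4 with hcase | hcase
  · -- small case: use the k = 1 term
    have hwd : (1:ℝ)/4 ≤ walkDist x 2 0 := by
      have h := (key x 1).1
      rw [show (2*1:ℕ) = 2 from by norm_num, pow_one] at h
      rw [haa, hbb, hs, ht] at haq
      linarith
    have hterm : ENNReal.ofReal (1/32 * μ) ≤ g 1 := by
      have h2 : ENNReal.ofReal (1/32 * μ) ≤ ENNReal.ofReal (walkDist x 2 0) / ENNReal.ofReal 2 := by
        rw [← ENNReal.ofReal_div_of_pos (by norm_num)]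
        exact ENNReal.ofReal_le_ofReal (by nlinarith)
      have h3 : ENNReal.ofReal (2:ℝ) = 2 := by norm_num
      rw [h3] at h2
      simpa [hg, one_add_one_eq_two] using h2
    exact le_trans hterm (ENNReal.le_tsum 1)
  · -- large case: sum the geometric/log series
    have habs : |α| < 1 := by rw [abs_of_pos hα0]; exact hα1
    have hS := (Real.hasSum_pow_div_log_of_abs_lt_one habs).div_const 2
    have hnn : ∀ j : ℕ, 0 ≤ α ^ (j+1) / (j+1) / 2 := fun j => by positivity
    have hmain : ENNReal.ofReal (1/32 * μ) ≤ ∑' j : ℕ, ENNReal.ofReal (α ^ (j+1) / (j+1) / 2) := by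
      rw [← ENNReal.ofReal_tsum_of_nonneg hnn hS.summable, hS.tsum_eq]
      apply ENNReal.ofReal_le_ofReal
      have : μ / 2 ≤ -Real.log (1 - α) := by linarith
      linarith
    refine le_trans hmain (le_trans ?_ (ENNReal.tsum_comp_le_tsum_of_injective
      (f := fun j : ℕ => 2*j+1) (fun j j' h => by simp only at h; omega) g))
    apply ENNReal.tsum_le_tsum
    intro j
    have hgj : g (2*j+1) = ENNReal.ofReal (walkDist x (2*j+2) 0) / ENNReal.ofReal ((2*j+2 : ℕ) : ℝ) := by
      rw [hg, ENNReal.ofReal_natCast]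
      push_cast
      ring_nf
    have hden : (0:ℝ) < ((2*j+2:ℕ):ℝ) := by positivity
    have harg : α ^ (j+1) / (j+1) / 2 = α ^ (j+1) / ((2*j+2:ℕ):ℝ) := by
      have hc : ((2*j+2:ℕ):ℝ) = ((j:ℝ)+1) * 2 := by push_cast; ring
      rw [hc, div_div]
    rw [hgj, harg, ENNReal.ofReal_div_of_pos hden]
    apply ENNReal.div_le_div_right
    apply ENNReal.ofReal_le_ofReal
    have := (key x (j+1)).1
    rw [← hαα] at this
    calc α ^ (j+1) ≤ walkDist x (2*(j+1)) 0 := this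
      _ = walkDist x (2*j+2) 0 := by rw [show 2*(j+1) = 2*j+2 from by ring]
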